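/- arXiv:2005.01327 — 3 statements merged into one kernel-verified Lean document; each statement's English description precedes it below -/
import Mathlib

section
/- If the phase-space function φ: (x_∞, x₀] → (0,1) of an SIR trajectory has Lipschitz derivative φ' > -1, then the trajectory x satisfies the autonomous ODE x'(t) = -α·φ(x(t))/(1 + φ'(x(t))), and the control b is uniquely recovered by b(t) = α/(x(t)·(1 + φ'(x(t)))). -/
open Set

/-- If the phase-space function `φ` of an SIR trajectory has Lipschitz
derivative `φ' > -1`, then `x` solves the autonomous ODE
`x' = -α φ(x)/(1 + φ'(x))` and the control is uniquely recovered as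
`b t = α/(x t * (1 + φ'(x t)))`. -/
theorem sir_reconstruct_control_from_phase
    (α K : ℝ) (hα : 0 < α) (b x y φ φ' : ℝ → ℝ)
    (hφd : ∀ u, HasDerivAt φ (φ' u) u)
    (hlip : LipschitzWith (Real.toNNReal K) φ')
    (hφ'gt : ∀ u, (-1 : ℝ) < φ' u)
    (hxd : ∀ t ∈ Ici (0:ℝ), HasDerivAt x (-(b t) * y t * x t) t)
    (hyd : ∀ t ∈ Ici (0:ℝ), HasDerivAt y (b t * y t * x t - α * y t) t)
    (hpos : ∀ t ∈ Ici (0:ℝ), 0 < x t ∧ 0 < y t)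
    (hrel : ∀ t ∈ Ici (0:ℝ), y t = φ (x t)) :
    ∀ t ∈ Ici (0:ℝ),
      HasDerivAt x (-(α * φ (x t)) / (1 + φ' (x t))) t ∧
      b t = α / (x t * (1 + φ' (x t))) := by
  intro t ht
  obtain ⟨hx0, hy0⟩ := hpos t ht
  have hx := hxd t ht
  have hy := hyd t ht
  have hyy : y t = φ (x t) := hrel t ht
  have hcomp : HasDerivAt (fun s => φ (x s)) (φ' (x t) * (-(b t) * y t * x t)) t :=
    (hφd (x t)).comp t hx
  have hud : UniqueDiffWithinAt ℝ (Ici (0:ℝ)) t := uniqueDiffOn_Ici 0 t ht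
  have hcw : HasDerivWithinAt y (φ' (x t) * (-(b t) * y t * x t)) (Ici 0) t :=
    (hcomp.hasDerivWithinAt).congr (fun s hs => hrel s hs) hyy
  have key : b t * y t * x t - α * y t = φ' (x t) * (-(b t) * y t * x t) :=
    ((hy.hasDerivWithinAt.derivWithin hud).symm).trans (hcw.derivWithin hud)
  have hDpos : 0 < 1 + φ' (x t) := by have := hφ'gt (x t); linarith
  have h2 : y t * (b t * x t * (1 + φ' (x t)) - α) = 0 := by linear_combination key
  have h3 : b t * x t * (1 + φ' (x t)) - α = 0 :=
    (mul_eq_zero.mp h2).resolve_left hy0.ne'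
  have hb : b t = α / (x t * (1 + φ' (x t))) := by
    field_simp
    linarith [h3]
  refine ⟨?_, hb⟩
  have hval : -(b t) * y t * x t = -(α * φ (x t)) / (1 + φ' (x t)) := by
    rw [hb, ← hyy]
    field_simp
  rw [← hval]
  exact hx
end

section
/- Let b ∈ B⁺ be a positive control with phase-space representation φ, and define J(φ) = ∫_{x_∞}^{x₀} (β/α)·((1+φ'(ξ))/φ(ξ) - α/(β·ξ·φ(ξ)))₊ dξ. Then the suppression cost satisfies C(b) = ∫₀^∞ (β - b(t))₊ dt = J(φ). -/
open Set Filter MeasureTheory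

/-- Change of variables to the phase space: for a strictly positive control
`b` with phase-space function `φ` (with right derivative `φ'`), the suppression
cost equals the phase-space cost functional:
`∫₀^∞ (β - b t)₊ dt = ∫_{x_∞}^{x₀} (β/α)((1+φ')/φ - α/(βξφ))₊ dξ`. -/
theorem sir_cost_equals_phase_cost
    (α β x₀ y₀ xinf : ℝ) (hα : 0 < α) (hβ : 0 < β)
    (b x y τ φ φ' : ℝ → ℝ) (hb : ∀ t, 0 < b t)
    (hx0 : x 0 = x₀) (hy0 : y 0 = y₀)
    (hx₀ : x₀ ∈ Ioo (0:ℝ) 1) (hy₀ : y₀ ∈ Ioo (0:ℝ) 1)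
    (hxd : ∀ t ∈ Ici (0:ℝ), HasDerivAt x (-(b t) * y t * x t) t)
    (hyd : ∀ t ∈ Ici (0:ℝ), HasDerivAt y (b t * y t * x t - α * y t) t)
    (hmem : ∀ t ∈ Ici (0:ℝ), x t ∈ Ioo (0:ℝ) 1 ∧ y t ∈ Ioo (0:ℝ) 1)
    (hanti : StrictAntiOn x (Ici 0))
    (hlim : Tendsto x atTop (nhds xinf))
    (hrange : x '' Ici 0 = Ioc xinf x₀)
    (hτ : ∀ t ∈ Ici (0:ℝ), τ (x t) = t)
    (hτinv : ∀ u ∈ Ioc xinf x₀, τ u ∈ Ici (0:ℝ) ∧ x (τ u) = u)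
    (hφ : ∀ u ∈ Ioc xinf x₀, φ u = y (τ u))
    (hφ' : ∀ u ∈ Ioc xinf x₀, φ' u = -1 + α / (b (τ u) * u)) :
    (∫ t in Ioi (0:ℝ), max (β - b t) 0) =
      ∫ u in Ioo xinf x₀,
        (β / α) * max ((1 + φ' u) / φ u - α / (β * u * φ u)) 0 := by
  set g : ℝ → ℝ := fun u => (β / α) * max ((1 + φ' u) / φ u - α / (β * u * φ u)) 0 with hg
  have h1 : (∫ u in Ioo xinf x₀, g u) = ∫ u in Ioc xinf x₀, g u :=
    (MeasureTheory.integral_Ioc_eq_integral_Ioo).symm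
  have h2 : (∫ u in Ioc xinf x₀, g u)
      = ∫ t in Ici (0:ℝ), |(-(b t) * y t * x t)| • g (x t) := by
    rw [← hrange]
    exact integral_image_eq_integral_abs_deriv_smul measurableSet_Ici
      (fun t ht => (hxd t ht).hasDerivWithinAt) hanti.injOn g
  have h3 : ∀ t ∈ Ici (0:ℝ), |(-(b t) * y t * x t)| • g (x t) = max (β - b t) 0 := by
    intro t ht
    obtain ⟨hxm, hym⟩ := hmem t ht
    have hxt : (0:ℝ) < x t := hxm.1
    have hyt : (0:ℝ) < y t := hym.1
    have hbt : (0:ℝ) < b t := hb t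
    have hu : x t ∈ Ioc xinf x₀ := by rw [← hrange]; exact mem_image_of_mem x ht
    have hτt : τ (x t) = t := hτ t ht
    have hφt : φ (x t) = y t := by rw [hφ _ hu, hτt]
    have hφ't : φ' (x t) = -1 + α / (b t * x t) := by rw [hφ' _ hu, hτt]
    have habs : |(-(b t) * y t * x t)| = b t * y t * x t := by
      have : -(b t) * y t * x t = -(b t * y t * x t) := by ring
      rw [this, abs_neg, abs_of_pos (by positivity)]
    rw [habs, smul_eq_mul]
    simp only [hg]
    rw [hφt, hφ't]
    have hA : (1 + (-1 + α / (b t * x t))) / y t - α / (β * x t * y t)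
        = (β - b t) * (α / (b t * y t * x t * β)) := by
      field_simp
      ring
    rw [hA]
    have hc : (0:ℝ) ≤ α / (b t * y t * x t * β) := by positivity
    have hswap : (β - b t) * (α / (b t * y t * x t * β)) ⊔ 0
        = ((β - b t) ⊔ 0) * (α / (b t * y t * x t * β)) := by
      rw [max_mul_of_nonneg _ _ hc, zero_mul]
    rw [hswap]
    have hne1 : b t * y t * x t * β ≠ 0 := by positivity
    field_simp
  have h4 : (∫ t in Ici (0:ℝ), |(-(b t) * y t * x t)| • g (x t))
      = ∫ t in Ici (0:ℝ), max (β - b t) 0 :=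
    setIntegral_congr_fun measurableSet_Ici h3
  rw [h1, h2, h4, MeasureTheory.integral_Ici_eq_integral_Ioi]
end

section
/- Suppose 0 < α < β, ε ∈ (0,1), x₀ = 1 - ε, and the laissez-faire peak exceeds γ (i.e., 1 + (α/β)ln(α/(β(1-ε))) - α/β > γ). Then the equation x* - (α/β)ln(x*) = 1 - γ - (α/β)ln(x₀) has a solution x* in [α/β, x₀], and the density f*(x) := 0 for x ≤ x*, f*(x) := -(1 - α/(βx)) / (γ - (x - x* - (α/β)ln(x/x*))) for x > x*, is the unique (up to null sets) minimizer of G over D_γ. -/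
/-!
Write `a = α/β`, `F` for the primitive of `f` from `a`, and `h x = x - a log x`. Since `F ≤ 0`,
the cost integrand is `(f + ν_F)₊ = e^{-F} (f e^F + γ⁻¹ h')₊ ≥ f e^F + γ⁻¹ h'`, and this
lower bound (the `lagrangian`) integrates to the same constant `y₀/γ - 1 + γ⁻¹ (h x₀ - h a)`
for every `f ∈ D_γ`, because `f e^F` is the derivative of the absolutely continuous `e^F`.
The density `f*` attains the bound: `F* = 0` up to `x*`, and `f* e^{F*} + γ⁻¹ h' = 0` after it.

Conversely, if `G f = G f*`, the lagrangian of `f` vanishes a.e. where `F < 0`, so on each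
interval where `Φ = e^F < 1` the function `Φ + γ⁻¹ h` is constant. As `h` is strictly increasing,
`Φ` cannot leave the level `1` and return to it, so `Φ = 1` up to its last contact point `c` and
`Φ = 1 - γ⁻¹ (h - h c)` after it; `Φ x₀ = y₀/γ` forces `c = x*`. Hence `F = F*` on the interval,
and differentiating gives `f = f*` a.e.
-/

open Set MeasureTheory Filter

open scoped NNReal in
theorem LipschitzOnWith.comp_absolutelyContinuousOnInterval {X Y : Type*} [PseudoMetricSpace X]
    [PseudoMetricSpace Y] {f : ℝ → X} {g : X → Y} {a b : ℝ} {K : ℝ≥0} {s : Set X}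
    (hg : LipschitzOnWith K g s) (hf : AbsolutelyContinuousOnInterval f a b)
    (hfs : MapsTo f (uIcc a b) s) : AbsolutelyContinuousOnInterval (g ∘ f) a b := by
  rw [absolutelyContinuousOnInterval_iff] at hf ⊢
  intro ε hε
  obtain ⟨δ, hδ, hfδ⟩ := hf (ε / (K + 1)) (by positivity)
  refine ⟨δ, hδ, fun E hE hlen => ?_⟩
  calc ∑ i ∈ Finset.range E.1, dist (g (f (E.2 i).1)) (g (f (E.2 i).2))
      ≤ ∑ i ∈ Finset.range E.1, K * dist (f (E.2 i).1) (f (E.2 i).2) :=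
        Finset.sum_le_sum fun i hi =>
          hg.dist_le_mul _ (hfs (hE.1 i hi).1) _ (hfs (hE.1 i hi).2)
    _ = K * ∑ i ∈ Finset.range E.1, dist (f (E.2 i).1) (f (E.2 i).2) := by
        rw [Finset.mul_sum]
    _ ≤ K * (ε / (K + 1)) := by gcongr; exact (hfδ E hE hlen).le
    _ < ε := by
        rw [mul_div_assoc', div_lt_iff₀ (by positivity)]
        nlinarith

theorem IntervalIntegrable.absolutelyContinuousOnInterval_exp_intervalIntegral {f : ℝ → ℝ}
    {a b : ℝ} (hf : IntervalIntegrable f volume a b) :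
    AbsolutelyContinuousOnInterval (fun x => Real.exp (∫ t in a..x, f t)) a b := by
  have hF := hf.absolutelyContinuousOnInterval_intervalIntegral (c := a) left_mem_uIcc
  obtain ⟨C, hC⟩ := hF.exists_bound
  obtain ⟨K, hK⟩ := Real.contDiff_exp.contDiffOn.exists_lipschitzOnWith one_ne_zero
    (convex_Icc (-C) C) isCompact_Icc
  exact hK.comp_absolutelyContinuousOnInterval hF fun x hx =>
    abs_le.1 ((Real.norm_eq_abs _).symm.trans_le (hC x hx))

theorem integral_mul_exp_intervalIntegral {f : ℝ → ℝ} {a b p q : ℝ}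
    (hf : IntervalIntegrable f volume a b) (hp : p ∈ uIcc a b) (hq : q ∈ uIcc a b) :
    ∫ x in p..q, f x * Real.exp (∫ t in a..x, f t) =
      Real.exp (∫ t in a..q, f t) - Real.exp (∫ t in a..p, f t) := by
  have hsub : uIcc p q ⊆ uIcc a b := uIcc_subset_uIcc hp hq
  rw [← (hf.absolutelyContinuousOnInterval_exp_intervalIntegral.mono hsub).integral_deriv_eq_sub]
  refine intervalIntegral.integral_congr_ae ?_
  filter_upwards [hf.ae_hasDerivAt_integral] with x hx hxpq
  exact ((hx (hsub (uIoc_subset_uIcc hxpq)) a left_mem_uIcc).exp.deriv.trans (mul_comm _ _)).symm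

theorem ae_restrict_Icc_eq_of_intervalIntegral_eq {f g : ℝ → ℝ} {a b : ℝ}
    (hf : IntervalIntegrable f volume a b) (hg : IntervalIntegrable g volume a b)
    (h : ∀ x ∈ Icc a b, ∫ t in a..x, f t = ∫ t in a..x, g t) :
    f =ᵐ[volume.restrict (Icc a b)] g := by
  rw [EventuallyEq, ← Measure.restrict_congr_set Ioo_ae_eq_Icc,
    ae_restrict_iff' measurableSet_Ioo]
  filter_upwards [hf.ae_hasDerivAt_integral, hg.ae_hasDerivAt_integral] with x hfx hgx hx
  have hmem : x ∈ uIcc a b := Icc_subset_uIcc (Ioo_subset_Icc_self hx)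
  have heq : (fun y => ∫ t in a..y, f t) =ᶠ[nhds x] fun y => ∫ t in a..y, g t :=
    eventually_of_mem (Ioo_mem_nhds hx.1 hx.2) fun y hy => h y (Ioo_subset_Icc_self hy)
  exact ((hfx hmem a left_mem_uIcc).congr_of_eventuallyEq heq.symm).unique
    (hgx hmem a left_mem_uIcc)

theorem IsClosed.exists_Ioo_disjoint_of_notMem {S : Set ℝ} (hS : IsClosed S) {p q x : ℝ}
    (hp : p ∈ S) (hq : q ∈ S) (hpx : p ≤ x) (hxq : x ≤ q) (hx : x ∉ S) :
    ∃ d e, d ∈ S ∧ e ∈ S ∧ p ≤ d ∧ d < e ∧ e ≤ q ∧ Disjoint (Ioo d e) S := by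
  have hbelow : BddAbove (S ∩ Iic x) := bddAbove_Iic.mono inter_subset_right
  have habove : BddBelow (S ∩ Ici x) := bddBelow_Ici.mono inter_subset_right
  have hd := (hS.inter isClosed_Iic).csSup_mem ⟨p, hp, hpx⟩ hbelow
  have he := (hS.inter isClosed_Ici).csInf_mem ⟨q, hq, hxq⟩ habove
  have hdx : sSup (S ∩ Iic x) < x := lt_of_le_of_ne hd.2 fun h => hx (h ▸ hd.1)
  have hxe : x < sInf (S ∩ Ici x) := lt_of_le_of_ne he.2 fun h => hx (h ▸ he.1)
  refine ⟨_, _, hd.1, he.1, le_csSup hbelow ⟨hp, hpx⟩, hdx.trans hxe,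
    csInf_le habove ⟨hq, hxq⟩, disjoint_left.2 fun z hz hzS => ?_⟩
  rcases le_total z x with hzx | hxz
  · exact (le_csSup hbelow ⟨hzS, hzx⟩).not_gt hz.1
  · exact (csInf_le habove ⟨hzS, hxz⟩).not_gt hz.2

theorem exists_eq_one_of_forall_sub_eq_of_lt_one {Φ g : ℝ → ℝ} {a b : ℝ} (hab : a ≤ b)
    (hΦ : ContinuousOn Φ (Icc a b)) (hle : ∀ x ∈ Icc a b, Φ x ≤ 1) (ha : Φ a = 1)
    (hg : StrictMonoOn g (Icc a b))
    (hslope : ∀ p q, a ≤ p → p ≤ q → q ≤ b → (∀ x ∈ Ioo p q, Φ x < 1) →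
      Φ q - Φ p = g p - g q) :
    ∃ c ∈ Icc a b, (∀ x ∈ Icc a c, Φ x = 1) ∧
      ∀ x ∈ Icc c b, Φ x = 1 - (g x - g c) := by
  set S := Icc a b ∩ Φ ⁻¹' {1}
  have hS : IsClosed S := hΦ.preimage_isClosed_of_isClosed isClosed_Icc isClosed_singleton
  have haS : a ∈ S := ⟨left_mem_Icc.2 hab, ha⟩
  have hSbdd : BddAbove S := bddAbove_Icc.mono inter_subset_left
  have hcS : sSup S ∈ S := hS.csSup_mem ⟨a, haS⟩ hSbdd
  have hlt_of_notMem : ∀ x ∈ Icc a b, x ∉ S → Φ x < 1 := fun x hx hxS =>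
    (hle x hx).lt_of_ne fun h => hxS ⟨hx, h⟩
  refine ⟨sSup S, hcS.1, fun x hx => ?_, fun x hx => ?_⟩
  · by_contra hx1
    obtain ⟨d, e, hdS, heS, had, hde, hec, hgap⟩ :=
      hS.exists_Ioo_disjoint_of_notMem haS hcS hx.1 hx.2 fun h => hx1 h.2
    have := hslope d e had hde.le (hec.trans hcS.1.2) fun z hz =>
      hlt_of_notMem z ⟨hdS.1.1.trans hz.1.le, hz.2.le.trans heS.1.2⟩ (disjoint_left.1 hgap hz)
    rw [hdS.2, heS.2, sub_self] at this
    exact (hg hdS.1 heS.1 hde).ne (sub_eq_zero.1 this.symm)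
  · have := hslope (sSup S) x hcS.1.1 hx.1 hx.2 fun z hz =>
      hlt_of_notMem z ⟨hcS.1.1.trans hz.1.le, hz.2.le.trans hx.2⟩
        fun hzS => (le_csSup hSbdd hzS).not_gt hz.1
    rw [hcS.2] at this
    linarith

namespace OptimalDensity

variable {a b γ y xs : ℝ} {f : ℝ → ℝ}

noncomputable def potential (a x : ℝ) : ℝ := x - a * Real.log x

theorem hasDerivAt_potential {x : ℝ} (hx : x ≠ 0) :
    HasDerivAt (potential a) (1 - a / x) x := by
  rw [div_eq_mul_inv]
  exact (hasDerivAt_id' x).sub ((Real.hasDerivAt_log hx).const_mul a)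

theorem continuousOn_potential {s : Set ℝ} (hs : ∀ x ∈ s, x ≠ 0) :
    ContinuousOn (potential a) s :=
  fun x hx => (hasDerivAt_potential (hs x hx)).continuousAt.continuousWithinAt

theorem strictMonoOn_potential (ha : 0 < a) : StrictMonoOn (potential a) (Ici a) := by
  refine strictMonoOn_of_deriv_pos (convex_Ici a)
    (continuousOn_potential fun x hx => (ha.trans_le hx).ne') fun x hx => ?_
  rw [interior_Ici] at hx
  rw [(hasDerivAt_potential (ha.trans hx).ne').deriv, sub_pos, div_lt_one (ha.trans hx)]
  exact hx

theorem potential_sub_potential {x z : ℝ} (hx : 0 < x) (hz : 0 < z) :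
    potential a x - potential a z = x - z - a * Real.log (x / z) := by
  rw [potential, potential, Real.log_div hx.ne' hz.ne']
  ring

theorem integral_one_sub_div {p q : ℝ} (hp : 0 < p) (hq : 0 < q) :
    ∫ x in p..q, (1 - a / x) = potential a q - potential a p := by
  have hpos : ∀ x ∈ uIcc p q, x ≠ 0 := fun x hx => ((lt_min hp hq).trans_le hx.1).ne'
  refine intervalIntegral.integral_eq_sub_of_hasDerivAt
    (fun x hx => hasDerivAt_potential (hpos x hx)) (ContinuousOn.intervalIntegrable ?_)
  fun_prop (disch := exact hpos)

/-- With `a = α/β`, `b = x₀` and `y = y₀`, `cost a b γ` is `G` and `Admissible a b γ y` is `D_γ`. -/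
noncomputable def cost (a b γ : ℝ) (f : ℝ → ℝ) : ℝ :=
  ∫ x in Icc a b, max (f x + γ⁻¹ * (1 - a / x) * Real.exp (-∫ t in a..x, f t)) 0

structure Admissible (a b γ y : ℝ) (f : ℝ → ℝ) : Prop where
  integrableOn : IntegrableOn f (Icc a b)
  integral_eq : ∫ t in a..b, f t = Real.log (y / γ)
  integral_nonpos : ∀ x ∈ Icc a b, ∫ t in a..x, f t ≤ 0
  ae_nonneg :
    ∀ᵐ x ∂(volume.restrict (Icc a b)), 0 ≤ f x + γ⁻¹ * Real.exp (-∫ t in a..x, f t)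

noncomputable def lagrangian (a γ : ℝ) (f : ℝ → ℝ) (x : ℝ) : ℝ :=
  f x * Real.exp (∫ t in a..x, f t) + γ⁻¹ * (1 - a / x)

theorem cost_integrand_eq (x : ℝ) :
    f x + γ⁻¹ * (1 - a / x) * Real.exp (-∫ t in a..x, f t) =
      Real.exp (-∫ t in a..x, f t) * lagrangian a γ f x := by
  have h : Real.exp (-∫ t in a..x, f t) * Real.exp (∫ t in a..x, f t) = 1 := by
    rw [← Real.exp_add, neg_add_cancel, Real.exp_zero]
  rw [lagrangian]
  linear_combination (-f x) * h

theorem lagrangian_le_cost_integrand {x : ℝ} (hx : ∫ t in a..x, f t ≤ 0) :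
    lagrangian a γ f x ≤
      max (f x + γ⁻¹ * (1 - a / x) * Real.exp (-∫ t in a..x, f t)) 0 := by
  rw [cost_integrand_eq]
  rcases le_or_gt 0 (lagrangian a γ f x) with hL | hL
  · exact le_max_of_le_left (le_mul_of_one_le_left hL (Real.one_le_exp (neg_nonneg.2 hx)))
  · exact le_max_of_le_right hL.le

theorem lagrangian_eq_zero_of_cost_integrand_eq {x : ℝ} (hx : ∫ t in a..x, f t < 0)
    (h : max (f x + γ⁻¹ * (1 - a / x) * Real.exp (-∫ t in a..x, f t)) 0 =
      lagrangian a γ f x) :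
    lagrangian a γ f x = 0 := by
  rw [cost_integrand_eq] at h
  rcases le_or_gt (lagrangian a γ f x) 0 with hL | hL
  · exact le_antisymm hL (h ▸ le_max_right _ _)
  · have hlt : lagrangian a γ f x < Real.exp (-∫ t in a..x, f t) * lagrangian a γ f x :=
      lt_mul_of_one_lt_left hL (Real.one_lt_exp_iff.2 (neg_pos.2 hx))
    rw [max_eq_left (hL.trans hlt).le] at h
    exact absurd h hlt.ne'

theorem continuousOn_intervalIntegral (hab : a ≤ b) (hf : IntegrableOn f (Icc a b)) :
    ContinuousOn (fun x => ∫ t in a..x, f t) (Icc a b) := by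
  rw [← uIcc_of_le hab] at hf ⊢
  exact intervalIntegral.continuousOn_primitive_interval hf

theorem integrableOn_lagrangian (ha : 0 < a) (hab : a ≤ b) (hf : IntegrableOn f (Icc a b)) :
    IntegrableOn (lagrangian a γ f) (Icc a b) := by
  have hexp := Real.continuous_exp.comp_continuousOn (continuousOn_intervalIntegral hab hf)
  have hrat : ContinuousOn (fun x : ℝ => γ⁻¹ * (1 - a / x)) (Icc a b) := by
    fun_prop (disch := exact fun x hx => (ha.trans_le hx.1).ne')
  exact (hf.mul_continuousOn hexp isCompact_Icc).add (hrat.integrableOn_Icc)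

theorem integrableOn_cost_integrand (ha : 0 < a) (hab : a ≤ b) (hf : IntegrableOn f (Icc a b)) :
    IntegrableOn (fun x => max (f x + γ⁻¹ * (1 - a / x) * Real.exp (-∫ t in a..x, f t)) 0)
      (Icc a b) := by
  have hν : ContinuousOn (fun x => γ⁻¹ * (1 - a / x) * Real.exp (-∫ t in a..x, f t))
      (Icc a b) := by
    have := continuousOn_intervalIntegral hab hf
    fun_prop (disch := exact fun x hx => (ha.trans_le hx.1).ne')
  exact (hf.add hν.integrableOn_Icc).pos_part

theorem integral_lagrangian (ha : 0 < a) (hab : a ≤ b) (hf : IntegrableOn f (Icc a b)) {p q : ℝ}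
    (hp : p ∈ Icc a b) (hq : q ∈ Icc a b) :
    ∫ x in p..q, lagrangian a γ f x =
      Real.exp (∫ t in a..q, f t) - Real.exp (∫ t in a..p, f t) +
        γ⁻¹ * (potential a q - potential a p) := by
  have hsub : uIcc p q ⊆ Icc a b := uIcc_subset_Icc hp hq
  have hfi : IntervalIntegrable f volume a b :=
    (intervalIntegrable_iff_integrableOn_Icc_of_le hab).2 hf
  have hrat : ContinuousOn (fun x : ℝ => 1 - a / x) (uIcc p q) := by
    fun_prop (disch := exact fun x hx => (ha.trans_le (hsub hx).1).ne')
  have hexp := Real.continuous_exp.comp_continuousOn (continuousOn_intervalIntegral hab hf)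
  unfold lagrangian
  rw [intervalIntegral.integral_add, intervalIntegral.integral_const_mul,
    integral_mul_exp_intervalIntegral hfi (Icc_subset_uIcc hp) (Icc_subset_uIcc hq),
    integral_one_sub_div (ha.trans_le hp.1) (ha.trans_le hq.1)]
  · exact ((hf.mul_continuousOn hexp isCompact_Icc).mono_set hsub).intervalIntegrable
  · exact (hrat.intervalIntegrable).const_mul _

theorem Admissible.setIntegral_lagrangian (hf : Admissible a b γ y f) (ha : 0 < a) (hab : a ≤ b)
    (hy : 0 < y) (hγ : 0 < γ) :
    ∫ x in Icc a b, lagrangian a γ f x =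
      y / γ - 1 + γ⁻¹ * (potential a b - potential a a) := by
  rw [integral_Icc_eq_integral_Ioc, ← intervalIntegral.integral_of_le hab,
    integral_lagrangian ha hab hf.integrableOn (left_mem_Icc.2 hab) (right_mem_Icc.2 hab),
    hf.integral_eq, intervalIntegral.integral_same, Real.exp_zero, Real.exp_log (div_pos hy hγ)]

theorem Admissible.setIntegral_lagrangian_le_cost (hf : Admissible a b γ y f) (ha : 0 < a)
    (hab : a ≤ b) : ∫ x in Icc a b, lagrangian a γ f x ≤ cost a b γ f :=
  setIntegral_mono_on (integrableOn_lagrangian ha hab hf.integrableOn)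
    (integrableOn_cost_integrand ha hab hf.integrableOn) measurableSet_Icc
    fun x hx => lagrangian_le_cost_integrand (hf.integral_nonpos x hx)

theorem Admissible.ae_lagrangian_eq_zero_of_cost_eq (hf : Admissible a b γ y f) (ha : 0 < a)
    (hab : a ≤ b) (heq : cost a b γ f = ∫ x in Icc a b, lagrangian a γ f x) :
    ∀ᵐ x ∂(volume.restrict (Icc a b)),
      ∫ t in a..x, f t < 0 → lagrangian a γ f x = 0 := by
  have hae := (integral_eq_iff_of_ae_le (integrableOn_lagrangian ha hab hf.integrableOn)
    (integrableOn_cost_integrand ha hab hf.integrableOn)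
    (ae_restrict_of_forall_mem measurableSet_Icc fun x hx =>
      lagrangian_le_cost_integrand (hf.integral_nonpos x hx))).1 heq.symm
  filter_upwards [hae] with x hx hneg
  exact lagrangian_eq_zero_of_cost_integrand_eq hneg hx.symm

theorem Admissible.exp_integral_sub_of_cost_eq (hf : Admissible a b γ y f) (ha : 0 < a)
    (hab : a ≤ b) (heq : cost a b γ f = ∫ x in Icc a b, lagrangian a γ f x) {p q : ℝ}
    (hap : a ≤ p) (hpq : p ≤ q) (hqb : q ≤ b)
    (hneg : ∀ x ∈ Ioo p q, ∫ t in a..x, f t < 0) :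
    Real.exp (∫ t in a..q, f t) - Real.exp (∫ t in a..p, f t) =
      γ⁻¹ * potential a p - γ⁻¹ * potential a q := by
  have hzero : ∫ x in p..q, lagrangian a γ f x = 0 := by
    rw [intervalIntegral.integral_of_le hpq, integral_Ioc_eq_integral_Ioo]
    refine integral_eq_zero_of_ae ?_
    have hsub : Ioo p q ⊆ Icc a b := fun x hx => ⟨hap.trans hx.1.le, hx.2.le.trans hqb⟩
    filter_upwards [ae_restrict_of_ae_restrict_of_subset hsub
      (hf.ae_lagrangian_eq_zero_of_cost_eq ha hab heq), ae_restrict_mem measurableSet_Ioo]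
      with x hx hxpq using hx (hneg x hxpq)
  rw [integral_lagrangian ha hab hf.integrableOn ⟨hap, hpq.trans hqb⟩ ⟨hap.trans hpq, hqb⟩]
    at hzero
  linear_combination hzero

noncomputable def optimalProfile (a γ xs x : ℝ) : ℝ :=
  if x ≤ xs then 1 else (γ - (potential a x - potential a xs)) / γ

noncomputable def optimalDensity (a γ xs x : ℝ) : ℝ :=
  if x ≤ xs then 0 else -(1 - a / x) / (γ - (potential a x - potential a xs))

theorem optimalDensity_of_le {x : ℝ} (hx : x ≤ xs) : optimalDensity a γ xs x = 0 :=
  if_pos hx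

theorem optimalDensity_of_lt {x : ℝ} (hx : xs < x) :
    optimalDensity a γ xs x = -(1 - a / x) / (γ - (potential a x - potential a xs)) :=
  if_neg (not_le.2 hx)

theorem Admissible.exp_integral_eq_of_cost_eq (hf : Admissible a b γ y f) (ha : 0 < a)
    (hγ : 0 < γ) (hy : 0 < y) (hxs : xs ∈ Icc a b)
    (hxs_eq : potential a b - potential a xs = γ - y)
    (heq : cost a b γ f = ∫ x in Icc a b, lagrangian a γ f x) :
    ∀ x ∈ Icc a b, Real.exp (∫ t in a..x, f t) = optimalProfile a γ xs x := by
  have hab : a ≤ b := hxs.1.trans hxs.2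
  have hmono : StrictMonoOn (fun x => γ⁻¹ * potential a x) (Icc a b) := fun x hx z hz hxz =>
    mul_lt_mul_of_pos_left (strictMonoOn_potential ha hx.1 hz.1 hxz) (inv_pos.2 hγ)
  obtain ⟨c, hc, hflat, hdesc⟩ := exists_eq_one_of_forall_sub_eq_of_lt_one hab
    (Φ := fun x => Real.exp (∫ t in a..x, f t))
    (Real.continuous_exp.comp_continuousOn (continuousOn_intervalIntegral hab hf.integrableOn))
    (fun x hx => Real.exp_le_one_iff.2 (hf.integral_nonpos x hx)) (by simp) hmono
    fun p q hap hpq hqb hlt => hf.exp_integral_sub_of_cost_eq ha hab heq hap hpq hqb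
      fun x hx => Real.exp_lt_one_iff.1 (hlt x hx)
  obtain rfl : c = xs := by
    have hb := hdesc b ⟨hc.2, le_rfl⟩
    rw [hf.integral_eq, Real.exp_log (div_pos hy hγ)] at hb
    refine (strictMonoOn_potential ha).injOn hc.1 hxs.1 ?_
    field_simp at hb
    linarith
  intro x hx
  unfold optimalProfile
  split_ifs with hxc
  · exact hflat x ⟨hx.1, hxc⟩
  · rw [hdesc x ⟨(not_le.1 hxc).le, hx.2⟩]
    field_simp

theorem sub_sub_potential_mem_Icc (ha : 0 < a) (hxs : xs ∈ Icc a b)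
    (hxs_eq : potential a b - potential a xs = γ - y) {x : ℝ} (hx : x ∈ Icc xs b) :
    γ - (potential a x - potential a xs) ∈ Icc y γ := by
  have hmono := (strictMonoOn_potential ha).monotoneOn
  have h1 := hmono hxs.1 (hxs.1.trans hx.1 : a ≤ x) hx.1
  have h2 := hmono (hxs.1.trans hx.1 : a ≤ x) (hxs.1.trans hxs.2 : a ≤ b) hx.2
  constructor <;> linarith

theorem sub_sub_potential_pos (ha : 0 < a) (hy : 0 < y) (hxs : xs ∈ Icc a b)
    (hxs_eq : potential a b - potential a xs = γ - y) {x : ℝ} (hx : x ∈ Icc xs b) :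
    0 < γ - (potential a x - potential a xs) :=
  hy.trans_le (sub_sub_potential_mem_Icc ha hxs hxs_eq hx).1

theorem hasDerivAt_log_sub_sub_potential {x : ℝ} (hx : x ≠ 0)
    (hw : γ - (potential a x - potential a xs) ≠ 0) :
    HasDerivAt (fun z => Real.log (γ - (potential a z - potential a xs)))
      (-(1 - a / x) / (γ - (potential a x - potential a xs))) x :=
  (((hasDerivAt_potential hx).sub_const _).const_sub γ).log hw

theorem integrableOn_optimalDensity (ha : 0 < a) (hy : 0 < y) (hxs : xs ∈ Icc a b)
    (hxs_eq : potential a b - potential a xs = γ - y) :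
    IntegrableOn (optimalDensity a γ xs) (Icc a b) := by
  have hw : ∀ x ∈ Icc xs b, γ - (potential a x - potential a xs) ≠ 0 := fun x hx =>
    (sub_sub_potential_pos ha hy hxs hxs_eq hx).ne'
  have hpos : ∀ x ∈ Icc xs b, x ≠ 0 := fun x hx => (ha.trans_le (hxs.1.trans hx.1)).ne'
  have hcont : ContinuousOn (fun x => -(1 - a / x) / (γ - (potential a x - potential a xs)))
      (Icc xs b) :=
    (continuousOn_const.sub (continuousOn_const.div continuousOn_id hpos)).neg.div
      (continuousOn_const.sub ((continuousOn_potential hpos).sub continuousOn_const)) hw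
  have hleft : IntegrableOn (optimalDensity a γ xs) (Icc a xs) :=
    integrableOn_zero.congr_fun (fun x hx => (optimalDensity_of_le hx.2).symm) measurableSet_Icc
  have hright : IntegrableOn (optimalDensity a γ xs) (Ioc xs b) :=
    (hcont.integrableOn_Icc.mono_set Ioc_subset_Icc_self).congr_fun
      (fun x hx => (optimalDensity_of_lt hx.1).symm) measurableSet_Ioc
  rw [← Icc_union_Ioc_eq_Icc hxs.1 hxs.2]
  exact hleft.union hright

theorem integral_optimalDensity_of_le (hxs : a ≤ xs) {x : ℝ} (hx : x ≤ xs) :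
    ∫ t in a..x, optimalDensity a γ xs t = 0 := by
  rw [intervalIntegral.integral_congr (g := fun _ => 0) fun t ht =>
    optimalDensity_of_le (ht.2.trans (max_le hxs hx)), intervalIntegral.integral_zero]

theorem integral_optimalDensity_of_ge (ha : 0 < a) (hy : 0 < y) (hxs : xs ∈ Icc a b)
    (hxs_eq : potential a b - potential a xs = γ - y) {x : ℝ} (hx : x ∈ Icc xs b) :
    ∫ t in xs..x, optimalDensity a γ xs t =
      Real.log (γ - (potential a x - potential a xs)) - Real.log γ := by
  have hw : ∀ z ∈ Icc xs x, γ - (potential a z - potential a xs) ≠ 0 := fun z hz =>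
    (sub_sub_potential_pos ha hy hxs hxs_eq ⟨hz.1, hz.2.trans hx.2⟩).ne'
  have hpos : ∀ z ∈ Icc xs x, z ≠ 0 := fun z hz => (ha.trans_le (hxs.1.trans hz.1)).ne'
  have hderiv z (hz : z ∈ Icc xs x) := hasDerivAt_log_sub_sub_potential (hpos z hz) (hw z hz)
  have hftc := intervalIntegral.integral_eq_sub_of_hasDerivAt_of_le hx.1
    (fun z hz => (hderiv z hz).continuousAt.continuousWithinAt)
    (fun z hz => optimalDensity_of_lt hz.1 ▸ hderiv z (Ioo_subset_Icc_self hz))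
    ((integrableOn_optimalDensity ha hy hxs hxs_eq).mono_set
      (uIcc_subset_Icc hxs ⟨hxs.1.trans hx.1, hx.2⟩)).intervalIntegrable
  simpa only [sub_self, sub_zero] using hftc

theorem exp_integral_optimalDensity (ha : 0 < a) (hγ : 0 < γ) (hy : 0 < y) (hxs : xs ∈ Icc a b)
    (hxs_eq : potential a b - potential a xs = γ - y) {x : ℝ} (hx : x ∈ Icc a b) :
    Real.exp (∫ t in a..x, optimalDensity a γ xs t) = optimalProfile a γ xs x := by
  unfold optimalProfile
  split_ifs with hxxs
  · rw [integral_optimalDensity_of_le hxs.1 hxxs, Real.exp_zero]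
  have hxsx : xs ≤ x := (not_le.1 hxxs).le
  have hint := integrableOn_optimalDensity ha hy hxs hxs_eq
  rw [← intervalIntegral.integral_add_adjacent_intervals
      (hint.mono_set (uIcc_subset_Icc (left_mem_Icc.2 (hxs.1.trans hxs.2)) hxs)).intervalIntegrable
      (hint.mono_set (uIcc_subset_Icc hxs hx)).intervalIntegrable,
    integral_optimalDensity_of_le hxs.1 le_rfl, zero_add,
    integral_optimalDensity_of_ge ha hy hxs hxs_eq ⟨hxsx, hx.2⟩, Real.exp_sub,
    Real.exp_log (sub_sub_potential_pos ha hy hxs hxs_eq ⟨hxsx, hx.2⟩),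
    Real.exp_log hγ]

theorem optimalProfile_le_one (ha : 0 < a) (hγ : 0 < γ) (hxs : xs ∈ Icc a b)
    (hxs_eq : potential a b - potential a xs = γ - y) {x : ℝ} (hx : x ∈ Icc a b) :
    optimalProfile a γ xs x ≤ 1 := by
  unfold optimalProfile
  split_ifs with h
  · exact le_rfl
  · exact div_le_one_of_le₀
      (sub_sub_potential_mem_Icc ha hxs hxs_eq ⟨(not_le.1 h).le, hx.2⟩).2 hγ.le

theorem optimalProfile_right (hγ : 0 < γ) (hxs : xs ∈ Icc a b)
    (hxs_eq : potential a b - potential a xs = γ - y) : optimalProfile a γ xs b = y / γ := by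
  unfold optimalProfile
  split_ifs with h
  · rw [le_antisymm h hxs.2, sub_self] at hxs_eq
    rw [← sub_eq_zero.1 hxs_eq.symm, div_self hγ.ne']
  · rw [hxs_eq, sub_sub_cancel]

theorem lagrangian_optimalDensity (ha : 0 < a) (hγ : 0 < γ) (hy : 0 < y) (hxs : xs ∈ Icc a b)
    (hxs_eq : potential a b - potential a xs = γ - y) {x : ℝ} (hx : x ∈ Icc a b) :
    lagrangian a γ (optimalDensity a γ xs) x = if x ≤ xs then γ⁻¹ * (1 - a / x) else 0 := by
  rw [lagrangian, exp_integral_optimalDensity ha hγ hy hxs hxs_eq hx, optimalProfile]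
  split_ifs with h
  · rw [optimalDensity_of_le h]
    ring
  · have hw := (sub_sub_potential_pos ha hy hxs hxs_eq ⟨(not_le.1 h).le, hx.2⟩).ne'
    rw [optimalDensity_of_lt (not_le.1 h)]
    field_simp
    ring

theorem admissible_optimalDensity (ha : 0 < a) (hγ : 0 < γ) (hy : 0 < y) (hxs : xs ∈ Icc a b)
    (hxs_eq : potential a b - potential a xs = γ - y) :
    Admissible a b γ y (optimalDensity a γ xs) where
  integrableOn := integrableOn_optimalDensity ha hy hxs hxs_eq
  integral_eq := by
    rw [← Real.log_exp (∫ t in a..b, _),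
      exp_integral_optimalDensity ha hγ hy hxs hxs_eq (right_mem_Icc.2 (hxs.1.trans hxs.2)),
      optimalProfile_right hγ hxs hxs_eq]
  integral_nonpos x hx := by
    rw [← Real.exp_le_one_iff, exp_integral_optimalDensity ha hγ hy hxs hxs_eq hx]
    exact optimalProfile_le_one ha hγ hxs hxs_eq hx
  ae_nonneg := ae_restrict_of_forall_mem measurableSet_Icc fun x hx => by
    rw [Real.exp_neg, exp_integral_optimalDensity ha hγ hy hxs hxs_eq hx, optimalProfile]
    split_ifs with h
    · rw [optimalDensity_of_le h, inv_one, mul_one, zero_add]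
      exact inv_nonneg.2 hγ.le
    · have hw := sub_sub_potential_pos ha hy hxs hxs_eq ⟨(not_le.1 h).le, hx.2⟩
      have hx0 := ha.trans_le hx.1
      rw [optimalDensity_of_lt (not_le.1 h)]
      have : -(1 - a / x) / (γ - (potential a x - potential a xs)) +
          γ⁻¹ * ((γ - (potential a x - potential a xs)) / γ)⁻¹ =
            a / x / (γ - (potential a x - potential a xs)) := by
        field_simp
        ring
      rw [this]
      positivity

theorem cost_optimalDensity (ha : 0 < a) (hγ : 0 < γ) (hy : 0 < y) (hxs : xs ∈ Icc a b)
    (hxs_eq : potential a b - potential a xs = γ - y) :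
    cost a b γ (optimalDensity a γ xs) =
      y / γ - 1 + γ⁻¹ * (potential a b - potential a a) := by
  rw [← (admissible_optimalDensity ha hγ hy hxs hxs_eq).setIntegral_lagrangian ha
    (hxs.1.trans hxs.2) hy hγ]
  refine setIntegral_congr_fun measurableSet_Icc fun x hx => ?_
  rw [cost_integrand_eq, lagrangian_optimalDensity ha hγ hy hxs hxs_eq hx, Real.exp_neg,
    exp_integral_optimalDensity ha hγ hy hxs hxs_eq hx, optimalProfile]
  split_ifs with h
  · rw [inv_one, one_mul, max_eq_left]
    exact mul_nonneg (inv_nonneg.2 hγ.le) (sub_nonneg.2 ((div_le_one (ha.trans_le hx.1)).2 hx.1))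
  · rw [mul_zero, max_self]

theorem cost_optimalDensity_le (ha : 0 < a) (hγ : 0 < γ) (hy : 0 < y) (hxs : xs ∈ Icc a b)
    (hxs_eq : potential a b - potential a xs = γ - y) (hf : Admissible a b γ y f) :
    cost a b γ (optimalDensity a γ xs) ≤ cost a b γ f := by
  rw [cost_optimalDensity ha hγ hy hxs hxs_eq,
    ← hf.setIntegral_lagrangian ha (hxs.1.trans hxs.2) hy hγ]
  exact hf.setIntegral_lagrangian_le_cost ha (hxs.1.trans hxs.2)

theorem Admissible.ae_eq_optimalDensity_of_cost_eq (hf : Admissible a b γ y f) (ha : 0 < a)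
    (hγ : 0 < γ) (hy : 0 < y) (hxs : xs ∈ Icc a b)
    (hxs_eq : potential a b - potential a xs = γ - y)
    (heq : cost a b γ f = cost a b γ (optimalDensity a γ xs)) :
    f =ᵐ[volume.restrict (Icc a b)] optimalDensity a γ xs := by
  have hab := hxs.1.trans hxs.2
  rw [cost_optimalDensity ha hγ hy hxs hxs_eq, ← hf.setIntegral_lagrangian ha hab hy hγ] at heq
  refine ae_restrict_Icc_eq_of_intervalIntegral_eq
    ((intervalIntegrable_iff_integrableOn_Icc_of_le hab).2 hf.integrableOn)
    ((intervalIntegrable_iff_integrableOn_Icc_of_le hab).2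
      (integrableOn_optimalDensity ha hy hxs hxs_eq))
    fun x hx => Real.exp_injective ?_
  rw [hf.exp_integral_eq_of_cost_eq ha hγ hy hxs hxs_eq heq x hx,
    exp_integral_optimalDensity ha hγ hy hxs hxs_eq hx]

end OptimalDensity

open OptimalDensity

/-- Characterization of the optimal density: under the underlying assumption
(laissez-faire peak exceeds `γ`), the equation
`x* - (α/β) log x* = 1 - γ - (α/β) log x₀` has a solution `x* ∈ [α/β, x₀]`,
and `f*(x) = 0` for `x ≤ x*`,
`f*(x) = -(1 - α/(βx)) / (γ - (x - x* - (α/β) log (x/x*)))` for `x > x*`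
is the unique (up to null sets) minimizer of `G` over `D_γ`. -/
theorem optimal_density_unique_minimizer
    (α β γ ε y₀ x₀ : ℝ) (hα : 0 < α) (hαβ : α < β)
    (hε : ε ∈ Ioo (0:ℝ) 1) (hx₀ : x₀ = 1 - ε) (hy₀ : y₀ = ε)
    (hγ : 0 < γ) (hεγ : ε < γ) (hxb : α / β < x₀)
    (hpeak : γ < 1 + (α / β) * Real.log (α / (β * (1 - ε))) - α / β)
    (F : (ℝ → ℝ) → ℝ → ℝ)
    (hF : ∀ f x, F f x = ∫ u in (α / β)..x, f u)
    (G : (ℝ → ℝ) → ℝ)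
    (hG : ∀ f, G f = ∫ x in Icc (α / β) x₀,
        max (f x + γ⁻¹ * (1 - α / (β * x)) * Real.exp (-(F f x))) 0)
    (D : (ℝ → ℝ) → Prop)
    (hD : ∀ f, D f ↔ (IntegrableOn f (Icc (α / β) x₀) ∧
        F f x₀ = Real.log (y₀ / γ) ∧
        (∀ x ∈ Icc (α / β) x₀, F f x ≤ 0) ∧
        (∀ᵐ x ∂(volume.restrict (Icc (α / β) x₀)),
          0 ≤ f x + γ⁻¹ * Real.exp (-(F f x))))) :
    ∃ xs ∈ Icc (α / β) x₀,
      xs - (α / β) * Real.log xs = 1 - γ - (α / β) * Real.log x₀ ∧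
      ∀ fstar : ℝ → ℝ,
        (∀ x, fstar x = if x ≤ xs then 0
          else -(1 - α / (β * x)) /
            (γ - (x - xs - (α / β) * Real.log (x / xs)))) →
        D fstar ∧ (∀ f, D f → G fstar ≤ G f) ∧
        (∀ f, D f → G f = G fstar →
          f =ᵐ[volume.restrict (Icc (α / β) x₀)] fstar) := by
  have ha : 0 < α / β := div_pos hα (hα.trans hαβ)
  subst x₀ y₀
  obtain rfl : F = fun f x => ∫ u in (α / β)..x, f u := funext fun f => funext (hF f)
  obtain rfl : G = cost (α / β) (1 - ε) γ := funext fun f => by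
    rw [hG, cost]
    simp only [div_div]
  obtain rfl : D = Admissible (α / β) (1 - ε) γ ε := funext fun f => propext <| (hD f).trans
    ⟨fun ⟨h₁, h₂, h₃, h₄⟩ => ⟨h₁, h₂, h₃, h₄⟩,
      fun h => ⟨h.integrableOn, h.integral_eq, h.integral_nonpos, h.ae_nonneg⟩⟩
  have hlog : Real.log (α / (β * (1 - ε))) = Real.log (α / β) - Real.log (1 - ε) := by
    rw [← div_div, Real.log_div ha.ne' (ha.trans hxb).ne']
  have hT : 1 - γ - α / β * Real.log (1 - ε) ∈
      Ioo (potential (α / β) (α / β)) (potential (α / β) (1 - ε)) := by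
    constructor <;> simp only [potential] <;> nlinarith
  obtain ⟨xs, hxs, hxs_eq⟩ := intermediate_value_Ioo hxb.le
    (continuousOn_potential fun x hx => (ha.trans_le hx.1).ne') hT
  refine ⟨xs, Ioo_subset_Icc_self hxs, hxs_eq, fun fstar hfstar => ?_⟩
  obtain rfl : fstar = optimalDensity (α / β) γ xs := funext fun x => by
    rw [hfstar, optimalDensity]
    split_ifs with h
    · rfl
    · rw [potential_sub_potential ((ha.trans hxs.1).trans (not_le.1 h)) (ha.trans hxs.1), div_div]
  have hxs_eq' : potential (α / β) (1 - ε) - potential (α / β) xs = γ - ε := by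
    rw [hxs_eq, potential]
    ring
  have hxs' := Ioo_subset_Icc_self hxs
  exact ⟨admissible_optimalDensity ha hγ hε.1 hxs' hxs_eq',
    fun f hf => cost_optimalDensity_le ha hγ hε.1 hxs' hxs_eq' hf,
    fun f hf heq => hf.ae_eq_optimalDensity_of_cost_eq ha hγ hε.1 hxs' hxs_eq' heq⟩
end
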